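/- arXiv:2111.02065 — 4 statements merged into one kernel-verified Lean document; each statement's English description precedes it below -/
import Mathlib

section
/- Let n, m be odd positive integers and G a graph with maximum degree Δ(G) ≤ m+n−2. Then G admits a red/blue edge coloring with no red copy of K_{1,n} and no blue copy of K_{1,m}. -/
open SimpleGraph

/-- The subgraph of `G` consisting of edges with color `b` under the 2-coloring `c`. -/
def colorSub {α : Type*} (G : SimpleGraph α) (c : Sym2 α → Bool) (b : Bool) :
    SimpleGraph α where
  Adj x y := G.Adj x y ∧ c s(x, y) = b
  symm := ⟨fun x y ⟨h1, h2⟩ => ⟨h1.symm, by rwa [Sym2.eq_swap]⟩⟩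
  loopless := ⟨fun x ⟨h, _⟩ => G.loopless.irrefl x h⟩

/-- `G` contains a copy of `H` (as a not necessarily induced subgraph). -/
def Contains {α β : Type*} (G : SimpleGraph α) (H : SimpleGraph β) : Prop :=
  ∃ f : β ↪ α, ∀ ⦃a b : β⦄, H.Adj a b → G.Adj (f a) (f b)

/-- `G → (F₁, F₂)`: every red/blue edge coloring of `G` yields a red `F₁` or a blue `F₂`. -/
def Arrows {α β γ : Type*} (G : SimpleGraph α) (F₁ : SimpleGraph β) (F₂ : SimpleGraph γ) :
    Prop :=
  ∀ c : Sym2 α → Bool,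
    Contains (colorSub G c true) F₁ ∨ Contains (colorSub G c false) F₂

/-- The star `K_{1,n}` with center `0` and `n` leaves. -/
def starG (n : ℕ) : SimpleGraph (Fin (n + 1)) where
  Adj i j := i ≠ j ∧ (i = 0 ∨ j = 0)
  symm := ⟨fun i j ⟨h1, h2⟩ => ⟨h1.symm, h2.symm⟩⟩
  loopless := ⟨fun i ⟨h, _⟩ => h rfl⟩

/-- The star forest `⊔_{j} K_{1, m j}`, with `j`-th component a star with center `⟨j, 0⟩`
and `m j` leaves. -/
def starForest (t : ℕ) (m : Fin t → ℕ) :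
    SimpleGraph (Σ j : Fin t, Fin (m j + 1)) where
  Adj x y := x.1 = y.1 ∧ x.2.val ≠ y.2.val ∧ (x.2.val = 0 ∨ y.2.val = 0)
  symm := ⟨fun x y ⟨h1, h2, h3⟩ => ⟨h1.symm, h2.symm, h3.symm⟩⟩
  loopless := ⟨fun x ⟨_, h, _⟩ => h rfl⟩

/-- The size Ramsey number `r̂(F₁, F₂)`: the minimum number of edges of a (finite) graph
`G` with `G → (F₁, F₂)`. -/
noncomputable def sizeRamsey {β γ : Type*} (F₁ : SimpleGraph β) (F₂ : SimpleGraph γ) : ℕ :=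
  sInf {N : ℕ | ∃ (V : Type) (_ : Fintype V) (G : SimpleGraph V),
    G.edgeSet.ncard = N ∧ Arrows G F₁ F₂}

/-!
Write `n = 2p + 1` and `m = 2q + 1`; it suffices to colour so that every vertex meets at most
`2p` red and `2q` blue edges. First orient `G` with all out- and in-degrees at most `p + q`.
Then split the arcs into red and blue so that every vertex has at most `p` red and `q` blue
out-arcs, and at most `p` red and `q` blue in-arcs: this is again an orientation problem, for the
bipartite graph joining the tail copy of each arc to its head copy (orient red arcs from tail to
head and blue ones back). This replaces Petersen's 2-factor theorem.

Both orientations come from one fact: an orientation with out-degrees `≤ u` and in-degrees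
`≤ u'` exists as soon as a fractional one does (weights `1/2, 1/2` on each edge of `G`,
resp. `p/(p+q), q/(p+q)` on the bipartite graph). Take an orientation of least total excess.
If a vertex had too large out-degree, the arc weights inside the set of vertices reachable from
it show that this set contains a vertex of too small out-degree; reversing a directed path to it
lowers the excess.
-/

open Finset

namespace SimpleGraph

variable {V : Type*}

structure IsOrientation (H : SimpleGraph V) (o : V → V → Prop) : Prop where
  adj : ∀ ⦃a b⦄, o a b → H.Adj a b
  total : ∀ ⦃a b⦄, H.Adj a b → o a b ∨ o b a
  asymm : ∀ ⦃a b⦄, o a b → ¬ o b a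

variable {H : SimpleGraph V} {o : V → V → Prop}

theorem IsOrientation.flip (ho : H.IsOrientation o) : H.IsOrientation (flip o) :=
  ⟨fun _ _ h => (ho.adj h).symm, fun _ _ h => ho.total h.symm, fun _ _ h => ho.asymm h⟩

theorem exists_isOrientation (H : SimpleGraph V) : ∃ o, H.IsOrientation o :=
  ⟨fun a b => H.Adj a b ∧ WellOrderingRel a b,
    fun _ _ h => h.1,
    fun a b h => (trichotomous_of WellOrderingRel a b).imp (⟨h, ·⟩)
      (·.elim (absurd · h.ne) (⟨h.symm, ·⟩)),
    fun _ _ h h' => asymm_of WellOrderingRel h.2 h'.2⟩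

open Classical in
noncomputable def reverseEdge (o : V → V → Prop) (x y : V) : V → V → Prop :=
  fun a b => if s(a, b) = s(x, y) then o b a else o a b

theorem isOrientation_reverseEdge (ho : H.IsOrientation o) (x y : V) :
    H.IsOrientation (reverseEdge o x y) := by
  classical
  refine ⟨fun a b h => ?_, fun a b h => ?_, fun a b h => ?_⟩ <;>
    simp only [SimpleGraph.reverseEdge, Sym2.eq_swap (a := b)] at h ⊢ <;> split_ifs at h ⊢
  · exact (ho.adj h).symm
  · exact ho.adj h
  · exact (ho.total h).symm
  · exact ho.total h
  · exact ho.asymm h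
  · exact ho.asymm h

theorem exists_walk_of_reflTransGen (ho : H.IsOrientation o) {x z : V}
    (h : Relation.ReflTransGen o x z) : ∃ P : H.Walk x z, ∀ d ∈ P.darts, o d.fst d.snd := by
  induction h using Relation.ReflTransGen.head_induction_on with
  | refl => exact ⟨.nil, by simp⟩
  | head hxy _ ih =>
    obtain ⟨P, hP⟩ := ih
    refine ⟨.cons (ho.adj hxy) P, ?_⟩
    simp only [Walk.darts_cons, List.mem_cons, forall_eq_or_imp]
    exact ⟨hxy, hP⟩

variable [Fintype V]

open Classical in
noncomputable def outDeg (o : V → V → Prop) (v : V) : ℕ := #{w | o v w}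

noncomputable abbrev inDeg (o : V → V → Prop) (v : V) : ℕ := outDeg (flip o) v

noncomputable def excess (u u' : V → ℕ) (o : V → V → Prop) : ℕ :=
  ∑ v, ((outDeg o v - u v) + (inDeg o v - u' v))

theorem excess_flip (u u' : V → ℕ) (o : V → V → Prop) :
    excess u' u (flip o) = excess u u' o :=
  sum_congr rfl fun _ _ => add_comm _ _

theorem IsOrientation.outDeg_add_inDeg [DecidableRel H.Adj] (ho : H.IsOrientation o) (v : V) :
    outDeg o v + inDeg o v = H.degree v := by
  classical
  rw [← card_neighborFinset_eq_degree, neighborFinset_eq_filter,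
    ← card_filter_add_card_filter_not (o v), outDeg, inDeg, outDeg, filter_filter, filter_filter]
  congr 2 <;> ext w <;> simp only [mem_filter, mem_univ, true_and]
  · exact ⟨fun h => ⟨ho.adj h, h⟩, And.right⟩
  · exact ⟨fun h => ⟨(ho.adj h).symm, ho.asymm h⟩,
      fun ⟨h, h'⟩ => (ho.total h).resolve_left h'⟩

open Classical in
theorem IsOrientation.outDeg_reverseEdge (ho : H.IsOrientation o) {x y : V} (hxy : o x y)
    (t : V) : outDeg (reverseEdge o x y) t + (if t = x then 1 else 0) =
      outDeg o t + (if t = y then 1 else 0) := by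
  have hne : x ≠ y := (ho.adj hxy).ne
  have hrev : ∀ a b, reverseEdge o x y a b ↔ if s(a, b) = s(x, y) then o b a else o a b :=
    fun _ _ => Iff.rfl
  by_cases htx : t = x
  · subst htx
    have : ({w | reverseEdge o t y t w} : Finset V) = ({w | o t w} : Finset V).erase y := by
      ext w
      simp only [mem_filter, mem_univ, true_and, mem_erase, hrev, Sym2.congr_right]
      by_cases hw : w = y
      · subst hw; simp [ho.asymm hxy]
      · simp [hw]
    rw [outDeg, outDeg, this, if_pos rfl, if_neg hne, card_erase_add_one (by simpa using hxy),
      add_zero]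
  by_cases hty : t = y
  · subst hty
    have : ({w | reverseEdge o x t t w} : Finset V) = insert x ({w | o t w} : Finset V) := by
      ext w
      simp only [mem_filter, mem_univ, true_and, mem_insert, hrev, Sym2.eq_swap (a := x),
        Sym2.congr_right]
      by_cases hw : w = x
      · subst hw; simp [hxy]
      · simp [hw]
    rw [outDeg, outDeg, this, card_insert_of_notMem (by simpa using ho.asymm hxy), if_neg htx,
      if_pos rfl]
  · have : ∀ w, s(t, w) ≠ s(x, y) := fun w h => by
      rcases Sym2.mem_iff.mp (h ▸ Sym2.mem_mk_left t w) with h | h <;> contradiction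
    simp only [if_neg htx, if_neg hty, outDeg, hrev, this, if_false]

open Classical in
theorem IsOrientation.exists_outDeg_of_isPath (ho : H.IsOrientation o) {x z : V}
    (P : H.Walk x z) (hP : P.IsPath) (hd : ∀ d ∈ P.darts, o d.fst d.snd) :
    ∃ o', H.IsOrientation o' ∧ ∀ t, outDeg o' t + (if t = x then 1 else 0) =
      outDeg o t + (if t = z then 1 else 0) := by
  induction P generalizing o with
  | nil => exact ⟨o, ho, fun _ => rfl⟩
  | @cons x y z h P ih =>
    rw [Walk.cons_isPath_iff] at hP
    have hxy : o x y := hd ⟨(x, y), h⟩ (by simp [Walk.darts_cons])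
    have hd' : ∀ d ∈ P.darts, reverseEdge o x y d.fst d.snd := by
      intro d hdP
      have hfst : d.fst ≠ x := fun h => hP.2 (h ▸ P.dart_fst_mem_support_of_mem_darts hdP)
      have hsnd : d.snd ≠ x := fun h => hP.2 (h ▸ P.dart_snd_mem_support_of_mem_darts hdP)
      have : s(d.fst, d.snd) ≠ s(x, y) := fun h => by
        rcases Sym2.mem_iff.mp (h.symm ▸ Sym2.mem_mk_left x y) with h | h
        exacts [hfst h.symm, hsnd h.symm]
      simp only [reverseEdge, this, if_false]
      exact hd d (by simp [Walk.darts_cons, hdP])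
    obtain ⟨o', ho', hout⟩ := ih (isOrientation_reverseEdge ho x y) hP.1 hd'
    refine ⟨o', ho', fun t => ?_⟩
    have := ho.outDeg_reverseEdge hxy t
    have := hout t
    omega

open Classical in
theorem IsOrientation.exists_outDeg_of_reflTransGen (ho : H.IsOrientation o) {x z : V}
    (h : Relation.ReflTransGen o x z) :
    ∃ o', H.IsOrientation o' ∧ ∀ t, outDeg o' t + (if t = x then 1 else 0) =
      outDeg o t + (if t = z then 1 else 0) := by
  obtain ⟨P, hP⟩ := exists_walk_of_reflTransGen ho h
  exact ho.exists_outDeg_of_isPath P.bypass P.bypass_isPath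
    fun d hd => hP d (P.darts_bypass_subset_darts hd)

section Fractional

variable [DecidableRel H.Adj] {f : V → V → ℕ} {K : ℕ} {u u' : V → ℕ}

/-- If every vertex reachable from `v` had out-degree at least `u`, the arcs inside the
reachable set, each of weight `K = f x y + f y x`, would outweigh `K * ∑ u`. -/
theorem IsOrientation.exists_reflTransGen_outDeg_lt (ho : H.IsOrientation o) (hK : 0 < K)
    (hf : ∀ ⦃x y⦄, H.Adj x y → f x y + f y x = K)
    (hu : ∀ x, ∑ y ∈ H.neighborFinset x, f x y ≤ K * u x) {v : V} (hv : u v < outDeg o v) :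
    ∃ z, Relation.ReflTransGen o v z ∧ outDeg o z < u z := by
  classical
  by_contra! hS
  set S : Finset V := {z | Relation.ReflTransGen o v z}
  have hvS : v ∈ S := by simpa [S] using Relation.ReflTransGen.refl
  have hout : ∀ x ∈ S, outDeg o x = ∑ y ∈ S, if o x y then 1 else 0 := by
    intro x hx
    rw [← card_filter, outDeg]
    congr 1
    ext y
    simp only [S, mem_filter, mem_univ, true_and]
    have hvx : Relation.ReflTransGen o v x := by simpa [S] using hx
    exact ⟨fun h => ⟨hvx.tail h, h⟩, And.right⟩
  have hsplit : ∀ x y, (if H.Adj x y then f x y else 0) =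
      (if o x y then f x y else 0) + (if o y x then f x y else 0) := by
    intro x y
    by_cases hxy : o x y
    · simp [hxy, ho.adj hxy, ho.asymm hxy]
    · by_cases hyx : o y x
      · simp [hxy, hyx, (ho.adj hyx).symm]
      · have : ¬ H.Adj x y := fun h => (ho.total h).elim hxy hyx
        simp [hxy, hyx, this]
  have hweight : K * ∑ x ∈ S, outDeg o x ≤ K * ∑ x ∈ S, u x := calc
    K * ∑ x ∈ S, outDeg o x = ∑ x ∈ S, ∑ y ∈ S, if o x y then f x y + f y x else 0 := by
        rw [mul_sum]
        refine sum_congr rfl fun x hx => ?_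
        rw [hout x hx, mul_sum]
        refine sum_congr rfl fun y _ => ?_
        split_ifs with h
        · rw [hf (ho.adj h), mul_one]
        · rw [mul_zero]
    _ = ∑ x ∈ S, ∑ y ∈ S, if H.Adj x y then f x y else 0 := by
        simp only [hsplit, sum_add_distrib, ite_add_zero]
        rw [sum_comm (f := fun x y => if o y x then f x y else 0)]
    _ ≤ ∑ x ∈ S, ∑ y ∈ H.neighborFinset x, f x y := by
        refine sum_le_sum fun x _ => ?_
        rw [← sum_filter]
        exact sum_le_sum_of_subset fun y hy => by simpa using (mem_filter.mp hy).2
    _ ≤ K * ∑ x ∈ S, u x := by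
        rw [mul_sum]
        exact sum_le_sum fun x _ => hu x
  have hlt : ∑ x ∈ S, u x < ∑ x ∈ S, outDeg o x :=
    sum_lt_sum (fun x hx => hS x (by simpa [S] using hx)) ⟨v, hvS, hv⟩
  exact absurd hweight (not_le.mpr (Nat.mul_lt_mul_of_pos_left hlt hK))

theorem IsOrientation.exists_excess_lt (ho : H.IsOrientation o) (hK : 0 < K)
    (hf : ∀ ⦃x y⦄, H.Adj x y → f x y + f y x = K)
    (hu : ∀ x, ∑ y ∈ H.neighborFinset x, f x y ≤ K * u x)
    (hdeg : ∀ x, H.degree x ≤ u x + u' x) {v : V} (hv : u v < outDeg o v) :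
    ∃ o', H.IsOrientation o' ∧ excess u u' o' < excess u u' o := by
  classical
  obtain ⟨z, hreach, hz⟩ := ho.exists_reflTransGen_outDeg_lt hK hf hu hv
  obtain ⟨o', ho', hout⟩ := ho.exists_outDeg_of_reflTransGen hreach
  have hne : v ≠ z := by rintro rfl; omega
  have key : ∀ t, (outDeg o' t - u t) + (inDeg o' t - u' t) +
      (if t = v then 1 else 0) ≤ (outDeg o t - u t) + (inDeg o t - u' t) := by
    intro t
    have h₁ := hout t
    have h₂ := ho.outDeg_add_inDeg t
    have h₃ := ho'.outDeg_add_inDeg t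
    have h₄ := hdeg t
    split_ifs at h₁ ⊢ <;> subst_vars <;> omega
  refine ⟨o', ho', sum_lt_sum (fun t _ => ?_) ⟨v, mem_univ v, ?_⟩⟩
  · exact le_of_add_le_left (key t)
  · simpa using key v

/-- An orientation with out-degrees at most `u` and in-degrees at most `u'` exists as soon as
there is a fractional one: arc weights `f x y / K` summing to `1` on every edge, with weighted
out-degrees at most `u` and weighted in-degrees at most `u'`. -/
theorem exists_isOrientation_outDeg_le_inDeg_le (hK : 0 < K)
    (hf : ∀ ⦃x y⦄, H.Adj x y → f x y + f y x = K)
    (hu : ∀ x, ∑ y ∈ H.neighborFinset x, f x y ≤ K * u x)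
    (hu' : ∀ x, ∑ y ∈ H.neighborFinset x, f y x ≤ K * u' x) :
    ∃ o, H.IsOrientation o ∧ ∀ v, outDeg o v ≤ u v ∧ inDeg o v ≤ u' v := by
  have hdeg : ∀ x, H.degree x ≤ u x + u' x := fun x => by
    have : K * H.degree x =
        ∑ y ∈ H.neighborFinset x, f x y + ∑ y ∈ H.neighborFinset x, f y x := by
      rw [← sum_add_distrib, sum_congr rfl fun y hy => hf ((mem_neighborFinset _ _ _).mp hy),
        sum_const, card_neighborFinset_eq_degree, smul_eq_mul, mul_comm]
    exact Nat.le_of_mul_le_mul_left (by linarith [hu x, hu' x]) hK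
  obtain ⟨o, ho, hmin⟩ := (measure (excess u u')).wf.has_min {o | H.IsOrientation o}
    (H.exists_isOrientation)
  refine ⟨o, ho, fun v => ?_⟩
  rw [← not_lt, ← not_lt, ← not_or]
  rintro (h | h)
  · obtain ⟨o', ho', hlt⟩ := ho.exists_excess_lt hK hf hu hdeg h
    exact hmin o' ho' hlt
  · obtain ⟨o', ho', hlt⟩ := ho.flip.exists_excess_lt (f := fun x y => f y x) hK
      (fun x y hxy => (add_comm _ _).trans (hf hxy)) hu'
      (fun x => (hdeg x).trans_eq (add_comm _ _)) h
    rw [excess_flip] at hlt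
    exact hmin (flip o') ho'.flip ((excess_flip u' u o').trans_lt hlt)

theorem exists_isOrientation_outDeg_le_inDeg_le_of_degree_le {k : ℕ}
    (h : ∀ v, H.degree v ≤ 2 * k) :
    ∃ o, H.IsOrientation o ∧ ∀ v, outDeg o v ≤ k ∧ inDeg o v ≤ k :=
  exists_isOrientation_outDeg_le_inDeg_le (f := fun _ _ => 1) two_pos (fun _ _ _ => rfl)
    (fun x => by simpa using h x) (fun x => by simpa using h x)

end Fractional

def bipartiteOfRel (r : V → V → Prop) : SimpleGraph (V ⊕ V) where
  Adj
    | .inl v, .inr w => r v w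
    | .inr w, .inl v => r v w
    | _, _ => False
  symm := ⟨by rintro (v | v) (w | w) h <;> exact h⟩
  loopless := ⟨by rintro (v | v) h <;> exact h⟩

open Classical in
theorem neighborFinset_bipartiteOfRel_inl (r : V → V → Prop) (v : V) :
    (bipartiteOfRel r).neighborFinset (.inl v) = ({w | r v w} : Finset V).map .inr := by
  ext (w | w) <;> simp only [mem_neighborFinset] <;> simp [bipartiteOfRel]

open Classical in
theorem neighborFinset_bipartiteOfRel_inr (r : V → V → Prop) (w : V) :
    (bipartiteOfRel r).neighborFinset (.inr w) = ({v | r v w} : Finset V).map .inl := by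
  ext (v | v) <;> simp only [mem_neighborFinset] <;> simp [bipartiteOfRel]

theorem outDeg_le_of_injective {W : Type*} [Fintype W] {r : V → V → Prop} {R : W → W → Prop}
    {g : V → W} (hg : Function.Injective g) {a : V} {b : W}
    (h : ∀ ⦃w⦄, r a w → R b (g w)) :
    outDeg r a ≤ outDeg R b := by
  classical
  exact card_le_card_of_injOn g (fun w hw => by simpa using h (by simpa using hw)) hg.injOn

theorem exists_cover_outDeg_le_inDeg_le {r : V → V → Prop} {p q : ℕ}
    (hr : ∀ v, outDeg r v ≤ p + q ∧ inDeg r v ≤ p + q) :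
    ∃ red blue : V → V → Prop, (∀ ⦃v w⦄, r v w → red v w ∨ blue v w) ∧
      ∀ v, outDeg red v ≤ p ∧ inDeg red v ≤ p ∧
        outDeg blue v ≤ q ∧ inDeg blue v ≤ q := by
  classical
  rcases Nat.eq_zero_or_pos (p + q) with hpq | hpq
  · exact ⟨r, r, fun _ _ h => .inl h, fun v => by have := hr v; omega⟩
  set wt : V ⊕ V → ℕ := Sum.elim (fun _ => p) (fun _ => q)
  have hf : ∀ ⦃x y⦄, (bipartiteOfRel r).Adj x y → wt x + wt y = p + q := by
    rintro (v | v) (w | w) h <;> simp_all [bipartiteOfRel, wt, add_comm]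
  have hu : ∀ x, ∑ _ ∈ (bipartiteOfRel r).neighborFinset x, wt x ≤ (p + q) * wt x := by
    rintro (v | w) <;>
      simp only [neighborFinset_bipartiteOfRel_inl, neighborFinset_bipartiteOfRel_inr, sum_const,
        card_map, smul_eq_mul]
    exacts [Nat.mul_le_mul_right _ (hr v).1, Nat.mul_le_mul_right _ (hr w).2]
  have hu' : ∀ x, ∑ y ∈ (bipartiteOfRel r).neighborFinset x, wt y ≤
      (p + q) * Sum.elim (fun _ => q) (fun _ => p) x := by
    rintro (v | w) <;>
      simp only [neighborFinset_bipartiteOfRel_inl, neighborFinset_bipartiteOfRel_inr, sum_map,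
        Function.Embedding.inl_apply, Function.Embedding.inr_apply, wt, Sum.elim_inl, Sum.elim_inr,
        sum_const, smul_eq_mul]
    exacts [Nat.mul_le_mul_right _ (hr v).1, Nat.mul_le_mul_right _ (hr w).2]
  obtain ⟨O, hO, hOdeg⟩ :=
    exists_isOrientation_outDeg_le_inDeg_le (f := fun x _ => wt x) hpq hf hu hu'
  refine ⟨fun v w => O (.inl v) (.inr w), fun v w => O (.inr w) (.inl v),
    fun v w h => hO.total h, fun v => ⟨?_, ?_, ?_, ?_⟩⟩
  · exact (outDeg_le_of_injective Sum.inr_injective fun _ h => h).trans (hOdeg (.inl v)).1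
  · exact (outDeg_le_of_injective Sum.inl_injective fun _ h => h).trans (hOdeg (.inr v)).2
  · exact (outDeg_le_of_injective Sum.inr_injective fun _ h => h).trans (hOdeg (.inl v)).2
  · exact (outDeg_le_of_injective Sum.inl_injective fun _ h => h).trans (hOdeg (.inr v)).1

theorem degree_le_outDeg_add_inDeg {H : SimpleGraph V} {v : V} [Fintype (H.neighborSet v)]
    {r : V → V → Prop} (h : ∀ ⦃w⦄, H.Adj v w → r v w ∨ r w v) :
    H.degree v ≤ outDeg r v + inDeg r v := by
  classical
  rw [← card_neighborFinset_eq_degree]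
  refine (card_le_card fun w hw => ?_).trans (card_union_le {w | r v w} {w | r w v})
  simpa using h ((mem_neighborFinset _ _ _).mp hw)

theorem not_contains_starG_of_degree_lt {α : Type*} {H : SimpleGraph α} [H.LocallyFinite]
    {n : ℕ} (h : ∀ v, H.degree v < n) : ¬ Contains H (starG n) := by
  rintro ⟨f, hf⟩
  classical
  have : n ≤ H.degree (f 0) := by
    rw [← card_neighborFinset_eq_degree]
    calc n = #(univ.map ((Fin.succEmb n).trans f)) := by simp
      _ ≤ _ := card_le_card fun w hw => ?_
    obtain ⟨i, -, rfl⟩ := mem_map.mp hw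
    exact (mem_neighborFinset ..).mpr (hf ⟨(Fin.succ_ne_zero i).symm, .inl rfl⟩)
  exact (h (f 0)).not_ge this

open Classical in
theorem exists_coloring_degree_le (G : SimpleGraph V) [DecidableRel G.Adj] {p q : ℕ}
    (h : ∀ v, G.degree v ≤ 2 * p + 2 * q) :
    ∃ c : Sym2 V → Bool, ∀ v,
      (colorSub G c true).degree v ≤ 2 * p ∧ (colorSub G c false).degree v ≤ 2 * q := by
  obtain ⟨o, ho, hodeg⟩ := exists_isOrientation_outDeg_le_inDeg_le_of_degree_le (k := p + q)
    fun v => (h v).trans_eq (by ring)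
  obtain ⟨red, blue, hcover, hdeg⟩ := exists_cover_outDeg_le_inDeg_le hodeg
  refine ⟨Sym2.lift ⟨fun v w => decide (red v w ∨ red w v), fun _ _ => by simp only [or_comm]⟩,
    fun v => ⟨?_, ?_⟩⟩
  · refine (degree_le_outDeg_add_inDeg fun w hw => ?_).trans (by linarith [hdeg v])
    simpa [colorSub] using hw.2
  · refine (degree_le_outDeg_add_inDeg (r := blue) fun w hw => ?_).trans (by linarith [hdeg v])
    have hred : ¬ (red v w ∨ red w v) := by simpa [colorSub] using hw.2
    rcases ho.total hw.1 with h | h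
    · exact .inl ((hcover h).resolve_left fun h' => hred (.inl h'))
    · exact .inr ((hcover h).resolve_left fun h' => hred (.inr h'))

end SimpleGraph

/-- If `n`, `m` are odd and `Δ(G) ≤ m + n - 2`, then `G` has a
`(K_{1,n}, K_{1,m})`-free red/blue edge coloring. -/
theorem free_coloring_of_odd_maxDegree_le {V : Type} [Fintype V] (G : SimpleGraph V)
    [DecidableRel G.Adj] (n m : ℕ) (hn : Odd n) (hm : Odd m)
    (hΔ : G.maxDegree ≤ m + n - 2) :
    ∃ c : Sym2 V → Bool,
      ¬ Contains (colorSub G c true) (starG n) ∧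
      ¬ Contains (colorSub G c false) (starG m) := by
  classical
  obtain ⟨p, rfl⟩ := hn
  obtain ⟨q, rfl⟩ := hm
  obtain ⟨c, hc⟩ := exists_coloring_degree_le G (p := p) (q := q) fun v => by
    have := G.degree_le_maxDegree v
    omega
  exact ⟨c, not_contains_starG_of_degree_lt fun v => Nat.lt_succ_of_le (hc v).1,
    not_contains_starG_of_degree_lt fun v => Nat.lt_succ_of_le (hc v).2⟩
end

section
/- Every regular graph of even degree 2k can be decomposed into k edge-disjoint 2-factors (2-regular spanning subgraphs). -/
open SimpleGraph

/-!
Orient the edges of `G` so that every vertex has as many out-neighbours as in-neighbours: while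
edges remain there is a cycle (an acyclic graph with an edge has a vertex of degree one), so the
edge set splits into cycles, each oriented along itself. In a `2k`-regular graph every vertex then
has `k` out- and `k` in-neighbours, so by Hall's theorem some permutation `σ` sends every `v` to
an out-neighbour. As `σ v → σ (σ v)` and no edge is oriented both ways, `σ (σ v) ≠ v`; hence the
edges `{v, σ v}` form a 2-factor. Removing it leaves a `2(k-1)`-regular graph.
-/

theorem List.ncard_setOf_prodMk_mem {α β : Type*} [DecidableEq α] {l : List (α × β)}
    (hl : l.Nodup) (a : α) : {b | (a, b) ∈ l}.ncard = (l.map Prod.fst).count a := by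
  classical
  have hsnd : ((l.filter (·.1 = a)).map Prod.snd).Nodup :=
    (hl.filter _).map_on fun x hx y hy hxy => Prod.ext
      ((by simpa using (List.mem_filter.1 hx).2 : x.1 = a).trans
        (by simpa using (List.mem_filter.1 hy).2 : y.1 = a).symm) hxy
  have hset : {b | (a, b) ∈ l} = ↑((l.filter (·.1 = a)).map Prod.snd).toFinset := by
    ext b; simp
  rw [hset, Set.ncard_coe_finset, List.toFinset_card_of_nodup hsnd, List.length_map,
    List.count_eq_countP, List.countP_map, ← List.countP_eq_length_filter]
  rfl

theorem exists_injective_of_le_ncard_of_ncard_le {α β : Type*} [Finite α] [Finite β]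
    (r : α → β → Prop) {k : ℕ} (hk : 0 < k) (hout : ∀ a, k ≤ {b | r a b}.ncard)
    (hin : ∀ b, {a | r a b}.ncard ≤ k) :
    ∃ f : α → β, Function.Injective f ∧ ∀ a, r a (f a) := by
  classical
  have := Fintype.ofFinite α
  have := Fintype.ofFinite β
  refine (Fintype.all_card_le_filter_rel_iff_exists_injective r).1 fun A => ?_
  set T : Finset β := {b | ∃ a ∈ A, r a b}
  -- double counting the pairs `(a, b) ∈ A × T` with `r a b`
  refine Nat.le_of_mul_le_mul_right (Finset.card_mul_le_card_mul r (t := T) (fun a ha => ?_)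
    fun b _ => ?_) hk
  · refine (hout a).trans ?_
    rw [Set.ncard_eq_toFinset_card', Set.toFinset_ofPred]
    exact Finset.card_le_card fun b hb => by
      simp only [Finset.mem_filter, Finset.mem_univ, true_and] at hb
      exact Finset.mem_filter.2 ⟨Finset.mem_filter.2 ⟨Finset.mem_univ _, a, ha, hb⟩, hb⟩
  · refine le_trans ?_ (hin b)
    rw [Set.ncard_eq_toFinset_card', Set.toFinset_ofPred]
    exact Finset.card_le_card fun a ha => by
      simp only [Finset.bipartiteBelow, Finset.mem_filter] at ha
      simpa using ha.2

theorem Fin.iSup_cons {α : Type*} [CompleteLattice α] {k : ℕ} (a : α) (f : Fin k → α) :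
    ⨆ i, (Fin.cons a f : Fin (k + 1) → α) i = a ⊔ ⨆ i, f i :=
  le_antisymm (iSup_le <| Fin.cases le_sup_left fun i => le_sup_of_le_right (le_iSup f i))
    (sup_le (le_iSup_of_le 0 le_rfl) (iSup_le fun i => le_iSup_of_le i.succ le_rfl))

open Function in
theorem Fin.pairwise_disjoint_cons {α : Type*} [PartialOrder α] [OrderBot α] {k : ℕ} {a : α}
    {f : Fin k → α} (ha : ∀ i, Disjoint a (f i)) (hf : Pairwise (Disjoint on f)) :
    Pairwise (Disjoint on (Fin.cons a f : Fin (k + 1) → α)) := by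
  intro i j hij
  cases i using Fin.cases <;> cases j using Fin.cases <;>
    simp only [onFun, Fin.cons_zero, Fin.cons_succ]
  · exact absurd rfl hij
  · exact ha _
  · exact (ha _).symm
  · exact hf (ne_of_apply_ne Fin.succ hij)

namespace SimpleGraph

variable {V : Type*} {G : SimpleGraph V}

theorem Walk.map_fst_darts_perm_map_snd_darts {u : V} (c : G.Walk u u) :
    (c.darts.map (·.toProd.1)).Perm (c.darts.map (·.toProd.2)) := by
  rw [map_fst_darts, map_snd_darts, ← List.perm_cons u]
  have h := List.dropLast_append_getLast c.support_ne_nil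
  rw [c.getLast_support] at h
  refine (List.perm_append_singleton _ _).symm.trans ?_
  rw [h, c.cons_tail_support]

theorem ncard_neighborSet_sdiff [Finite V] {H : SimpleGraph V} (hHG : H ≤ G) (v : V) :
    ((G \ H).neighborSet v).ncard = (G.neighborSet v).ncard - (H.neighborSet v).ncard := by
  rw [neighborSet_sdiff]
  exact Set.ncard_sdiff fun _ hw => hHG hw

theorem IsAcyclic.exists_ncard_neighborSet_eq_one [Finite V] (hG : G.IsAcyclic) {x y : V}
    (hxy : G.Adj x y) : ∃ v, (G.neighborSet v).ncard = 1 := by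
  have : Nonempty V := ⟨x⟩
  obtain ⟨u, v, p, hp, hmax⟩ := Walk.exists_isPath_forall_isPath_length_le_length G
  have hnil : ¬p.Nil := by
    intro hpnil
    have := hmax x y (Walk.cons hxy Walk.nil) (by simp [hxy.ne])
    simp [Walk.length_eq_zero_iff.2 hpnil] at this
  refine ⟨u, Set.ncard_eq_one.2 ⟨p.snd, Set.eq_singleton_iff_unique_mem.2
    ⟨p.adj_snd hnil, fun w hw => hG.eq_snd_of_adj_start hp hw ?_⟩⟩⟩
  by_contra hwp
  have := hmax _ _ _ (hp.cons hwp (h := G.adj_symm hw))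
  simp at this

theorem exists_isCycle_of_even_ncard_neighborSet [Finite V]
    (heven : ∀ v, Even (G.neighborSet v).ncard) {x y : V} (hxy : G.Adj x y) :
    ∃ (u : V) (c : G.Walk u u), c.IsCycle := by
  by_contra! h
  obtain ⟨v, hv⟩ := IsAcyclic.exists_ncard_neighborSet_eq_one h hxy
  exact Nat.not_even_one (hv ▸ heven v)

structure IsEulerianOrientation (G : SimpleGraph V) (o : V → V → Prop) : Prop where
  fromRel_eq : fromRel o = G
  asymm : ∀ ⦃x y⦄, o x y → ¬ o y x
  ncard_out_eq_ncard_in : ∀ v, {w | o v w}.ncard = {w | o w v}.ncard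

namespace IsEulerianOrientation

variable {o : V → V → Prop}

theorem adj_of_rel (ho : G.IsEulerianOrientation o) {x y : V} (h : o x y) : G.Adj x y := by
  rw [← ho.fromRel_eq, fromRel_adj]
  exact ⟨fun hxy => ho.asymm h (hxy ▸ h), Or.inl h⟩

theorem neighborSet_eq_union (ho : G.IsEulerianOrientation o) (v : V) :
    G.neighborSet v = {w | o v w} ∪ {w | o w v} := by
  ext w
  rw [← ho.fromRel_eq]
  simp only [mem_neighborSet, fromRel_adj, Set.mem_union, Set.mem_ofPred_eq, and_iff_right_iff_imp]
  rintro (h | h) rfl <;> exact ho.asymm h h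

theorem ncard_neighborSet [Finite V] (ho : G.IsEulerianOrientation o) (v : V) :
    (G.neighborSet v).ncard = 2 * {w | o v w}.ncard := by
  have hdisj : Disjoint {w | o v w} {w | o w v} :=
    Set.disjoint_left.2 fun _ h h' => ho.asymm h h'
  rw [ho.neighborSet_eq_union, Set.ncard_union_eq hdisj, ← ho.ncard_out_eq_ncard_in, two_mul]

theorem sup [Finite V] {G' : SimpleGraph V} {o' : V → V → Prop}
    (ho : G.IsEulerianOrientation o) (ho' : G'.IsEulerianOrientation o') (h : Disjoint G G') :
    (G ⊔ G').IsEulerianOrientation (o ⊔ o') where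
  fromRel_eq := by
    ext x y
    simp only [← ho.fromRel_eq, ← ho'.fromRel_eq, sup_adj, fromRel_adj, Pi.sup_apply,
      sup_Prop_eq]
    tauto
  asymm x y hxy hyx := by
    have hdisj := disjoint_left.1 h
    rcases hxy with hxy | hxy <;> rcases hyx with hyx | hyx
    · exact ho.asymm hxy hyx
    · exact hdisj _ _ (ho.adj_of_rel hxy) (ho'.adj_of_rel hyx).symm
    · exact hdisj _ _ (ho.adj_of_rel hyx) (ho'.adj_of_rel hxy).symm
    · exact ho'.asymm hxy hyx
  ncard_out_eq_ncard_in v := by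
    have hdisj (x y : V) (hxy : o x y) (hxy' : o' x y) : False :=
      disjoint_left.1 h _ _ (ho.adj_of_rel hxy) (ho'.adj_of_rel hxy')
    change ({w | o v w} ∪ {w | o' v w}).ncard = ({w | o w v} ∪ {w | o' w v}).ncard
    rw [Set.ncard_union_eq, Set.ncard_union_eq, ho.ncard_out_eq_ncard_in,
      ho'.ncard_out_eq_ncard_in]
    exacts [Set.disjoint_left.2 fun w => hdisj w v, Set.disjoint_left.2 fun w => hdisj v w]

end IsEulerianOrientation

theorem isEulerianOrientation_bot : (⊥ : SimpleGraph V).IsEulerianOrientation ⊥ where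
  fromRel_eq := by ext; simp
  asymm _ _ h := h.elim
  ncard_out_eq_ncard_in _ := rfl

theorem Walk.IsTrail.isEulerianOrientation {u : V} {c : G.Walk u u} (hc : c.IsTrail) :
    c.toSubgraph.spanningCoe.IsEulerianOrientation
      fun x y => (x, y) ∈ c.darts.map (·.toProd) where
  fromRel_eq := by
    ext x y
    simp only [fromRel_adj, Subgraph.spanningCoe_adj, Walk.adj_toSubgraph_iff_mem_edges,
      Walk.edges_eq_map_darts, List.mem_map, Dart.edge, Sym2.eq_iff, Prod.ext_iff]
    constructor
    · rintro ⟨-, ⟨d, hd, h⟩ | ⟨d, hd, h⟩⟩ <;> exact ⟨d, hd, by tauto⟩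
    · rintro ⟨d, hd, ⟨rfl, rfl⟩ | ⟨rfl, rfl⟩⟩
      · exact ⟨d.adj.ne, Or.inl ⟨d, hd, rfl, rfl⟩⟩
      · exact ⟨d.adj.ne.symm, Or.inr ⟨d, hd, rfl, rfl⟩⟩
  asymm x y hxy hyx := by
    obtain ⟨d, hd, hdxy⟩ := List.mem_map.1 hxy
    obtain ⟨d', hd', hd'yx⟩ := List.mem_map.1 hyx
    have hedge : d'.edge = d.edge := by rw [Dart.edge, Dart.edge, hd'yx, hdxy, Sym2.eq_swap]
    obtain rfl := List.inj_on_of_nodup_map hc.edges_nodup hd' hd hedge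
    exact (hdxy ▸ d'.adj).ne (congrArg Prod.fst (hdxy.symm.trans hd'yx))
  ncard_out_eq_ncard_in v := by
    classical
    have hnodup : (c.darts.map (·.toProd)).Nodup :=
      (hc.edges_nodup.of_map _).map fun _ _ => Dart.ext _ _
    have hswap : {w | (w, v) ∈ c.darts.map (·.toProd)}
        = {w | (v, w) ∈ (c.darts.map (·.toProd)).map Prod.swap} := by
      ext w
      rw [Set.mem_ofPred_eq, Set.mem_ofPred_eq, List.mem_map_swap]
    rw [hswap, List.ncard_setOf_prodMk_mem hnodup,
      List.ncard_setOf_prodMk_mem (hnodup.map Prod.swap_injective), List.map_map, List.map_map,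
      List.map_map]
    exact c.map_fst_darts_perm_map_snd_darts.count_eq v

theorem exists_isEulerianOrientation [Finite V] (heven : ∀ v, Even (G.neighborSet v).ncard) :
    ∃ o, G.IsEulerianOrientation o := by
  induction G using WellFoundedLT.induction with | _ G ih => ?_
  obtain rfl | hG := eq_or_ne G ⊥
  · exact ⟨⊥, isEulerianOrientation_bot⟩
  obtain ⟨x, y, hxy⟩ := ne_bot_iff_exists_adj.1 hG
  obtain ⟨u, c, hc⟩ := exists_isCycle_of_even_ncard_neighborSet heven hxy
  have hC := hc.isTrail.isEulerianOrientation
  have hCG : c.toSubgraph.spanningCoe ≤ G := c.toSubgraph.spanningCoe_le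
  have hC_ne_bot : c.toSubgraph.spanningCoe ≠ ⊥ := ne_bot_iff_exists_adj.2
    ⟨u, c.snd, Walk.adj_toSubgraph_iff_mem_edges.2 (c.mk_start_snd_mem_edges hc.not_nil)⟩
  obtain ⟨o, ho⟩ := ih _ (sdiff_lt hCG hC_ne_bot) fun v => by
    rw [ncard_neighborSet_sdiff hCG, hC.ncard_neighborSet]
    exact (heven v).tsub (even_two_mul _)
  exact ⟨_, sup_sdiff_cancel_right hCG ▸ hC.sup ho disjoint_sdiff_self_right⟩

theorem ncard_neighborSet_fromRel_perm (σ : Equiv.Perm V) (hσ : ∀ v, σ (σ v) ≠ v) (v : V) :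
    ((fromRel fun x y => σ x = y).neighborSet v).ncard = 2 := by
  have hfix : σ v ≠ v := fun h => hσ v (by rw [h, h])
  have hset : (fromRel fun x y => σ x = y).neighborSet v = {σ v, σ.symm v} := by
    ext w
    simp only [mem_neighborSet, fromRel_adj, Set.mem_insert_iff, Set.mem_singleton_iff,
      Equiv.eq_symm_apply]
    constructor
    · rintro ⟨-, h | h⟩
      exacts [Or.inl h.symm, Or.inr h]
    · rintro (rfl | rfl)
      exacts [⟨hfix.symm, Or.inl rfl⟩, ⟨fun h => hfix (congrArg σ h), Or.inr rfl⟩]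
  rw [hset, Set.ncard_pair]
  intro h
  exact hσ v (by rw [h, Equiv.apply_symm_apply])

theorem exists_two_factor [Finite V] {k : ℕ} (hk : 0 < k)
    (hreg : ∀ v, (G.neighborSet v).ncard = 2 * k) :
    ∃ F ≤ G, ∀ v, (F.neighborSet v).ncard = 2 := by
  obtain ⟨o, ho⟩ := exists_isEulerianOrientation fun v => (hreg v) ▸ even_two_mul k
  have hout (v : V) : {w | o v w}.ncard = k := by
    have := ho.ncard_neighborSet v
    rw [hreg] at this
    omega
  obtain ⟨f, hf, hfo⟩ := exists_injective_of_le_ncard_of_ncard_le o hk (fun v => (hout v).ge)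
    fun v => (ho.ncard_out_eq_ncard_in v ▸ hout v).le
  let σ := Equiv.ofBijective f hf.bijective_of_finite
  refine ⟨fromRel fun x y => σ x = y, fun x y hxy => ?_,
    ncard_neighborSet_fromRel_perm σ fun v h => ho.asymm (hfo v)
      (by simpa only [show f (f v) = v from h] using hfo (f v))⟩
  rcases ((fromRel_adj _ _ _).1 hxy).2 with rfl | rfl
  exacts [ho.adj_of_rel (hfo x), (ho.adj_of_rel (hfo y)).symm]

end SimpleGraph

/-- Petersen: every `2k`-regular graph decomposes into `k` edge-disjoint
2-factors. -/
theorem petersen_two_factorable {V : Type} [Fintype V] (G : SimpleGraph V) (k : ℕ)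
    (hreg : ∀ v : V, (G.neighborSet v).ncard = 2 * k) :
    ∃ H : Fin k → SimpleGraph V,
      (∀ i, H i ≤ G) ∧
      (∀ i, ∀ v : V, ((H i).neighborSet v).ncard = 2) ∧
      Pairwise (fun i j => Disjoint (H i) (H j)) ∧
      (⨆ i, H i) = G := by
  induction k generalizing G with
  | zero =>
    have hG : G = ⊥ := eq_bot_iff_forall_not_adj.2 fun x y hxy =>
      ((Set.ncard_eq_zero (Set.toFinite _)).1 (hreg x)).subset hxy
    exact ⟨finZeroElim, finZeroElim, finZeroElim, fun i => i.elim0, by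
      rw [hG, iSup_of_empty]⟩
  | succ k ih =>
    obtain ⟨F, hFG, hF⟩ := exists_two_factor k.succ_pos hreg
    obtain ⟨H, hHG, hH, hdisj, hsup⟩ := ih (G \ F) fun v => by
      rw [ncard_neighborSet_sdiff hFG, hreg, hF]
      omega
    refine ⟨Fin.cons F H, Fin.cases hFG fun i => (hHG i).trans sdiff_le, Fin.cases hF hH,
      Fin.pairwise_disjoint_cons (fun i => disjoint_sdiff_self_right.mono_right (hHG i)) hdisj,
      ?_⟩
    rw [Fin.iSup_cons, hsup, sup_sdiff_cancel_right hFG]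
end

section
/- Let F be a graph with F → (K_{1,n}, ⊔_{j=1}^t K_{1,m_j}) where n ≥ 2, and let M be a maximum matching of F. Then the graph F∖M obtained by deleting the edges of M satisfies (F∖M) → (K_{1,n−1}, ⊔_{j=1}^t K_{1,m_j}). -/
open SimpleGraph

/-!
Given a colouring `c` of `F ∖ M`, colour `F` by `c` on `F ∖ M` and red on `M`. Since
`F → (K_{1,n}, ⊔ⱼ K_{1,mⱼ})`, this colouring has a blue star forest, which avoids `M` and so is
blue in `F ∖ M`, or a red `K_{1,n}`. Because `M` is a matching, at most one edge of that star
lies in `M`; dropping the leaf of that edge (or any leaf) leaves a red `K_{1,n-1}` in `F ∖ M`.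
-/

noncomputable def paintRed {α : Type*} (c : Sym2 α → Bool) (s : Set (Sym2 α)) :
    Sym2 α → Bool :=
  open Classical in fun e => c e || decide (e ∈ s)

section paintRed

variable {α : Type*} (G : SimpleGraph α) (c : Sym2 α → Bool) (s : Set (Sym2 α))

theorem colorSub_deleteEdges_true :
    colorSub (G.deleteEdges s) c true = (colorSub G (paintRed c s) true).deleteEdges s := by
  ext x y
  by_cases hs : s(x, y) ∈ s <;> simp [colorSub, paintRed, hs]

theorem colorSub_deleteEdges_false :
    colorSub (G.deleteEdges s) c false = colorSub G (paintRed c s) false := by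
  ext x y
  by_cases hs : s(x, y) ∈ s <;> simp [colorSub, paintRed, hs]

end paintRed

theorem starG_adj_succAbove {k : ℕ} {j : Fin (k + 2)} (hj : j ≠ 0) {a b : Fin (k + 1)}
    (hab : (starG k).Adj a b) : (starG (k + 1)).Adj (j.succAbove a) (j.succAbove b) := by
  have hj0 : j.succAbove 0 = 0 := Fin.succAbove_ne_zero_zero hj
  obtain ⟨hne, ha | hb⟩ := hab
  · exact ⟨Fin.succAbove_right_injective.ne hne, Or.inl (ha ▸ hj0)⟩
  · exact ⟨Fin.succAbove_right_injective.ne hne, Or.inr (hb ▸ hj0)⟩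

theorem contains_starG_deleteEdges_of_isMatching {V : Type*} {G F : SimpleGraph V} {k : ℕ}
    {M : F.Subgraph} (hM : M.IsMatching) (h : Contains G (starG (k + 1))) :
    Contains (G.deleteEdges M.edgeSet) (starG k) := by
  obtain ⟨f, hf⟩ := h
  obtain ⟨j, hj0, hj⟩ : ∃ j : Fin (k + 2), j ≠ 0 ∧
      ∀ i, i ≠ 0 → i ≠ j → s(f 0, f i) ∉ M.edgeSet := by
    by_cases hex : ∃ j : Fin (k + 2), j ≠ 0 ∧ s(f 0, f j) ∈ M.edgeSet
    · obtain ⟨j, hj0, hjM⟩ := hex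
      exact ⟨j, hj0, fun i _ hij hiM => hij (f.injective (hM.eq_of_adj_left hiM hjM))⟩
    · simp only [not_exists, not_and] at hex
      exact ⟨1, one_ne_zero, fun i hi0 _ => hex i hi0⟩
  refine ⟨(Fin.succAboveEmb j).trans f, fun a b hab => ?_⟩
  have hadj := starG_adj_succAbove hj0 hab
  refine deleteEdges_adj.mpr ⟨hf hadj, ?_⟩
  change s(f (j.succAbove a), f (j.succAbove b)) ∉ M.edgeSet
  obtain ⟨hne, ha | hb⟩ := hadj
  · rw [ha] at hne ⊢
    exact hj _ hne.symm (Fin.succAbove_ne j b)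
  · rw [hb] at hne ⊢
    rw [Sym2.eq_swap]
    exact hj _ hne (Fin.succAbove_ne j a)

theorem deleteMatching_arrows_general {V : Type} (F : SimpleGraph V) (n t : ℕ)
    (hn : 2 ≤ n) (m : Fin t → ℕ)
    (h : Arrows F (starG n) (starForest t m))
    (M : F.Subgraph) (hM : M.IsMatching) :
    Arrows (F.deleteEdges M.edgeSet) (starG (n - 1)) (starForest t m) := by
  obtain ⟨k, rfl⟩ : ∃ k, n = k + 1 := ⟨n - 1, by omega⟩
  intro c
  rcases h (paintRed c M.edgeSet) with hred | hblue
  · left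
    rw [colorSub_deleteEdges_true, Nat.add_sub_cancel]
    exact contains_starG_deleteEdges_of_isMatching hM hred
  · right
    rwa [colorSub_deleteEdges_false]

/-- if `F → (K_{1,n}, ⊔ⱼ K_{1,mⱼ})` with `n ≥ 2` and `M` is a maximum
matching of `F`, then `F \ M → (K_{1,n-1}, ⊔ⱼ K_{1,mⱼ})`. -/
theorem deleteMatching_arrows {V : Type} [Fintype V] (F : SimpleGraph V) (n t : ℕ)
    (hn : 2 ≤ n) (m : Fin t → ℕ)
    (h : Arrows F (starG n) (starForest t m))
    (M : F.Subgraph) (hM : M.IsMatching)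
    (hmax : ∀ M' : F.Subgraph, M'.IsMatching → M'.edgeSet.ncard ≤ M.edgeSet.ncard) :
    Arrows (F.deleteEdges M.edgeSet) (starG (n - 1)) (starForest t m) :=
  deleteMatching_arrows_general F n t hn m h M hM
end

section
/- Let n_1 ≥ ... ≥ n_s and m_1 ≥ ... ≥ m_t be positive integers, and set l_k = max{n_i + m_j − 1 : i + j = k} for 2 ≤ k ≤ s+t. Then the star forest F = ⊔_{k=2}^{s+t} K_{1,l_k} satisfies F → (⊔_{i=1}^s K_{1,n_i}, ⊔_{j=1}^t K_{1,m_j}); in particular r̂(⊔ K_{1,n_i}, ⊔ K_{1,m_j}) ≤ Σ_{k=2}^{s+t} l_k. -/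
open SimpleGraph

/-!
Colour the host forest and let `rₖ`, `bₖ` be the red and blue degrees of the centre of its
`k`-th star, so `rₖ + bₖ = lₖ`. By Hall's theorem a red `⊔ᵢ K_{1,nᵢ}` exists as soon as, for
every `i`, at least `i` stars have `rₖ ≥ nᵢ`. If this fails for some `i`, then for every `j` at
least `j` of the `i + j - 1` stars with index `k ≤ i + j` have `rₖ < nᵢ`, hence
`bₖ ≥ lₖ - nᵢ + 1 ≥ mⱼ`, because monotonicity gives `lₖ ≥ nᵢ + mⱼ - 1` for `k ≤ i + j`.
Hall's theorem then gives a blue `⊔ⱼ K_{1,mⱼ}`. The host forest has `Σ lₖ` edges.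
-/

open Finset Function

theorem Finset.exists_injective_forall_mem_of_add_one_le_card {s : ℕ} {ι : Type*}
    [DecidableEq ι] (A : Fin s → Finset ι) (hA : ∀ i, i.val + 1 ≤ #(A i)) :
    ∃ f : Fin s → ι, Injective f ∧ ∀ i, f i ∈ A i := by
  refine (all_card_le_biUnion_card_iff_exists_injective A).mp fun S => ?_
  rcases S.eq_empty_or_nonempty with rfl | hS
  · simp
  calc #S ≤ #(Iic (S.max' hS)) := card_le_card fun i hi => mem_Iic.mpr (S.le_max' i hi)
    _ = (S.max' hS).val + 1 := Fin.card_Iic _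
    _ ≤ #(A (S.max' hS)) := hA _
    _ ≤ #(S.biUnion A) := card_le_card (subset_biUnion_of_mem A (S.max'_mem hS))

section StarForest

variable {T : ℕ} {L : Fin T → ℕ}

theorem starForest_adj_iff {x y : Σ k, Fin (L k + 1)} :
    (starForest T L).Adj x y ↔ ∃ k, ∃ a : Fin (L k),
      (x = ⟨k, 0⟩ ∧ y = ⟨k, a.succ⟩) ∨ (x = ⟨k, a.succ⟩ ∧ y = ⟨k, 0⟩) := by
  constructor
  · obtain ⟨k, a⟩ := x
    obtain ⟨k', a'⟩ := y
    rintro ⟨rfl, hne, h0⟩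
    cases a using Fin.cases with
    | zero => cases a' using Fin.cases with
      | zero => simp at hne
      | succ b => exact ⟨k, b, .inl ⟨rfl, rfl⟩⟩
    | succ a => cases a' using Fin.cases with
      | zero => exact ⟨k, a, .inr ⟨rfl, rfl⟩⟩
      | succ b => simp at h0
  · rintro ⟨k, a, ⟨rfl, rfl⟩ | ⟨rfl, rfl⟩⟩ <;> simp [starForest]

theorem ncard_edgeSet_starForest_le : (starForest T L).edgeSet.ncard ≤ ∑ k, L k := by
  have hsub : (starForest T L).edgeSet ⊆
      Set.range fun x : Σ k, Fin (L k) => s(⟨x.1, 0⟩, ⟨x.1, x.2.succ⟩) := by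
    intro e he
    induction e using Sym2.ind with
    | _ x y =>
      obtain ⟨k, a, ⟨rfl, rfl⟩ | ⟨rfl, rfl⟩⟩ := starForest_adj_iff.mp he
      · exact ⟨⟨k, a⟩, rfl⟩
      · exact ⟨⟨k, a⟩, Sym2.eq_swap⟩
  calc (starForest T L).edgeSet.ncard ≤ (Set.range _).ncard := Set.ncard_le_ncard hsub
    _ ≤ (Set.univ : Set (Σ k, Fin (L k))).ncard := by
      rw [← Set.image_univ]; exact Set.ncard_image_le
    _ = ∑ k, L k := by simp

variable (c : Sym2 (Σ k, Fin (L k + 1)) → Bool) (b : Bool)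

/-- The leaves of the `k`-th star joined to its centre by an edge of colour `b`; leaf `a` is the
vertex `⟨k, a.succ⟩`. -/
def colorLeaves (k : Fin T) : Finset (Fin (L k)) :=
  {a | c s(⟨k, 0⟩, ⟨k, a.succ⟩) = b}

theorem card_colorLeaves_true_add_false (k : Fin T) :
    #(colorLeaves c true k) + #(colorLeaves c false k) = L k := by
  simpa [colorLeaves] using card_filter_add_card_filter_not (s := univ)
    fun a : Fin (L k) => c s(⟨k, 0⟩, ⟨k, a.succ⟩) = true

theorem colorSub_starForest_adj_of_mem_colorLeaves {k : Fin T} {a : Fin (L k)}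
    (ha : a ∈ colorLeaves c b k) :
    (colorSub (starForest T L) c b).Adj ⟨k, 0⟩ ⟨k, a.succ⟩ :=
  ⟨starForest_adj_iff.mpr ⟨k, a, .inl ⟨rfl, rfl⟩⟩, (mem_filter.mp ha).2⟩

theorem contains_colorSub_starForest_of_injective {s : ℕ} {n : Fin s → ℕ} (σ : Fin s → Fin T)
    (hσ : Injective σ) (hn : ∀ i, n i ≤ #(colorLeaves c b (σ i))) :
    Contains (colorSub (starForest T L) c b) (starForest s n) := by
  have leaves i : Nonempty (Fin (n i) ↪ colorLeaves c b (σ i)) :=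
    Function.Embedding.nonempty_of_card_le (by simpa using hn i)
  let e i := (leaves i).some.trans (Embedding.subtype _)
  have he i a : e i a ∈ colorLeaves c b (σ i) := ((leaves i).some a).2
  let g i : Fin (n i + 1) ↪ Fin (L (σ i) + 1) :=
    ⟨Fin.cons 0 (Fin.succ ∘ e i), Fin.cons_injective_of_injective
      (by simp) ((Fin.succ_injective _).comp (e i).injective)⟩
  refine ⟨Embedding.sigmaMap ⟨σ, hσ⟩ g, fun x y hxy => ?_⟩
  obtain ⟨i, a, ⟨rfl, rfl⟩ | ⟨rfl, rfl⟩⟩ := starForest_adj_iff.mp hxy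
  · exact colorSub_starForest_adj_of_mem_colorLeaves c b (he i a)
  · exact (colorSub_starForest_adj_of_mem_colorLeaves c b (he i a)).symm

theorem contains_colorSub_starForest_of_add_one_le_card {s : ℕ} {n : Fin s → ℕ}
    (hn : ∀ i, i.val + 1 ≤ #{k | n i ≤ #(colorLeaves c b k)}) :
    Contains (colorSub (starForest T L) c b) (starForest s n) := by
  obtain ⟨σ, hσ, hσn⟩ := exists_injective_forall_mem_of_add_one_le_card _ hn
  exact contains_colorSub_starForest_of_injective c b σ hσ fun i => (mem_filter.mp (hσn i)).2

end StarForest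

/-- Of the first `i + j + 1` indices at least `j + 1` have `d₁ k < x`, and each of those has
`y ≤ d₂ k`. -/
theorem add_one_le_card_filter_of_card_filter_le {T : ℕ} {d₁ d₂ : Fin T → ℕ} {x y i j : ℕ}
    (hij : i + j < T) (hd : ∀ k : Fin T, k.val ≤ i + j → x + y ≤ d₁ k + d₂ k + 1)
    (h₁ : #{k | x ≤ d₁ k} ≤ i) : j + 1 ≤ #{k | y ≤ d₂ k} := by
  let B : Finset (Fin T) := Iic ⟨i + j, hij⟩
  let R : Finset (Fin T) := {k | x ≤ d₁ k}
  have hB : B \ R ⊆ ({k | y ≤ d₂ k} : Finset (Fin T)) := by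
    intro k hk
    simp only [B, R, mem_sdiff, mem_Iic, Fin.le_def, mem_filter, mem_univ, true_and,
      not_le] at hk ⊢
    have := hd k hk.1
    omega
  have hBcard : #B = i + j + 1 := Fin.card_Iic _
  have hR : #R ≤ i := h₁
  have := le_card_sdiff R B
  have := card_le_card hB
  omega

theorem arrows_starForest {s t T : ℕ} {n : Fin s → ℕ} {m : Fin t → ℕ} {L : Fin T → ℕ}
    (hT : s + t ≤ T + 1)
    (hL : ∀ (i : Fin s) (j : Fin t) (k : Fin T), k.val ≤ i.val + j.val → n i + m j ≤ L k + 1) :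
    Arrows (starForest T L) (starForest s n) (starForest t m) := by
  intro c
  by_cases hred : ∀ i : Fin s, i.val + 1 ≤ #{k | n i ≤ #(colorLeaves c true k)}
  · exact .inl (contains_colorSub_starForest_of_add_one_le_card c true hred)
  push Not at hred
  obtain ⟨i, hi⟩ := hred
  refine .inr (contains_colorSub_starForest_of_add_one_le_card c false fun j => ?_)
  refine add_one_le_card_filter_of_card_filter_le (i := i) (j := j) (by omega) (fun k hk => ?_)
    (Nat.le_of_lt_succ hi)
  rw [card_colorLeaves_true_add_false]
  exact hL i j k hk

/-- `maxDiagSum n m k = max {n i + m j - 1 : i + j = k}` with `i` and `j` counted from `1`. -/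
def maxDiagSum {s t : ℕ} (n : Fin s → ℕ) (m : Fin t → ℕ) (k : ℕ) : ℕ :=
  ({p | (p.1.val + 1) + (p.2.val + 1) = k} : Finset (Fin s × Fin t)).sup
    fun p => n p.1 + m p.2 - 1

/-- Witnessed by the pair `(r - min j r, min j r)` on the diagonal, which lies below `(i, j)`. -/
theorem add_le_maxDiagSum_add_one {s t : ℕ} {n : Fin s → ℕ} {m : Fin t → ℕ} (hn : Antitone n)
    (hm : Antitone m) {i : Fin s} {j : Fin t} {r : ℕ} (hr : r ≤ i.val + j.val) :
    n i + m j ≤ maxDiagSum n m (r + 2) + 1 := by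
  let j' : Fin t := ⟨min j.val r, by omega⟩
  let i' : Fin s := ⟨r - min j.val r, by omega⟩
  have hmem : (i', j') ∈
      ({p | (p.1.val + 1) + (p.2.val + 1) = r + 2} : Finset (Fin s × Fin t)) := by
    simp only [mem_filter, mem_univ, true_and, i', j']
    omega
  have hsup := le_sup (f := fun p : Fin s × Fin t => n p.1 + m p.2 - 1) hmem
  have hi : n i ≤ n i' := hn (Fin.mk_le_of_le_val (by omega))
  have hj : m j ≤ m j' := hm (Fin.mk_le_of_le_val (by omega))
  simp only at hsup
  unfold maxDiagSum
  omega

theorem Finset.sum_fin_sub_one_eq_sum_Icc {M : Type*} [AddCommMonoid M] (f : ℕ → M) (N : ℕ) :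
    ∑ k : Fin (N - 1), f (k + 2) = ∑ k ∈ Icc 2 N, f k := by
  rw [Fin.sum_univ_eq_sum_range (fun k => f (k + 2)), ← Ico_add_one_right_eq_Icc,
    sum_Ico_eq_sum_range]
  simp only [add_comm 2]
  congr 1

theorem starForest_arrows_and_upper_bound_general (s t : ℕ)
    (n : Fin s → ℕ) (m : Fin t → ℕ) (hna : Antitone n) (hma : Antitone m) :
    Arrows (starForest (s + t - 1)
        (fun k => (Finset.univ.filter
            (fun p : Fin s × Fin t => (p.1.val + 1) + (p.2.val + 1) = k.val + 2)).sup
          (fun p => n p.1 + m p.2 - 1)))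
      (starForest s n) (starForest t m) ∧
    sizeRamsey (starForest s n) (starForest t m) ≤
      ∑ k ∈ Finset.Icc 2 (s + t),
        (Finset.univ.filter
            (fun p : Fin s × Fin t => (p.1.val + 1) + (p.2.val + 1) = k)).sup
          (fun p => n p.1 + m p.2 - 1) := by
  have harrows : Arrows (starForest (s + t - 1) fun k => maxDiagSum n m (k + 2))
      (starForest s n) (starForest t m) :=
    arrows_starForest (by omega) fun _ _ _ hk => add_le_maxDiagSum_add_one hna hma hk
  refine ⟨harrows, ?_⟩
  calc sizeRamsey (starForest s n) (starForest t m)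
      ≤ (starForest (s + t - 1) fun k => maxDiagSum n m (k + 2)).edgeSet.ncard :=
        Nat.sInf_le ⟨_, inferInstance, _, rfl, harrows⟩
    _ ≤ ∑ k : Fin (s + t - 1), maxDiagSum n m (k + 2) := ncard_edgeSet_starForest_le
    _ = ∑ k ∈ Icc 2 (s + t), maxDiagSum n m k := sum_fin_sub_one_eq_sum_Icc _ _

/-- the star forest `⊔_{k=2}^{s+t} K_{1,l_k}` arrows
`(⊔ᵢ K_{1,nᵢ}, ⊔ⱼ K_{1,mⱼ})`, where `l_k = max {nᵢ + mⱼ - 1 : i + j = k}`; in particular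
`r̂ ≤ Σ_{k=2}^{s+t} l_k`. -/
theorem starForest_arrows_and_upper_bound (s t : ℕ) (hs : 0 < s) (ht : 0 < t)
    (n : Fin s → ℕ) (m : Fin t → ℕ) (hna : Antitone n) (hma : Antitone m)
    (hn1 : ∀ i, 1 ≤ n i) (hm1 : ∀ j, 1 ≤ m j) :
    Arrows (starForest (s + t - 1)
        (fun k => (Finset.univ.filter
            (fun p : Fin s × Fin t => (p.1.val + 1) + (p.2.val + 1) = k.val + 2)).sup
          (fun p => n p.1 + m p.2 - 1)))
      (starForest s n) (starForest t m) ∧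
    sizeRamsey (starForest s n) (starForest t m) ≤
      ∑ k ∈ Finset.Icc 2 (s + t),
        (Finset.univ.filter
            (fun p : Fin s × Fin t => (p.1.val + 1) + (p.2.val + 1) = k)).sup
          (fun p => n p.1 + m p.2 - 1) :=
  starForest_arrows_and_upper_bound_general s t n m hna hma
end
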